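/- arXiv:2005.08137 — 7 statements merged into one kernel-verified Lean document; each statement's English description precedes it below -/
import Mathlib

section
/- Let E be a finite set, let 𝒮 be a nonempty finite family of subsets of E, and for each e ∈ E let 0 ≤ ℓ_e ≤ u_e. For a vector d in the box B = ∏_{e∈E} [ℓ_e, u_e], let OPT(d) = min_{S∈𝒮} Σ_{e∈S} d_e; for S ∈ 𝒮 let regret(S) = sup_{d∈B} (Σ_{e∈S} d_e − OPT(d)), and let MR = min_{S∈𝒮} regret(S). Suppose γ ≥ 1, δ ≥ 1, α ≥ 0, β ≥ 0, and x* ∈ [0,1]^E satisfy: (i) for all d ∈ B, Σ_{e∈E} d_e x*_e ≤ α·OPT(d) + β·MR; (ii) for all d ∈ B, OPT(d) ≤ δ·Σ_{e∈E} d_e x*_e; and (iii) S ∈ 𝒮 satisfies Σ_{e∈S} w_e ≤ γ·min_{S'∈𝒮} Σ_{e∈S'} w_e, where w_e = max{u_e(1 − δx*_e), ℓ_e(1 − δx*_e)} + δℓ_e x*_e. Then for every d ∈ B, Σ_{e∈S} d_e ≤ γδα·OPT(d) + (γδβ + γ)·MR. -/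
/-!
For each element, `w e` is the maximum over `d e ∈ [ℓ e, u e]` of the affine function
`d e - δ * (d e * x e - ℓ e * x e)`. Taking the maximum termwise gives, for every realization `d`,
`∑_S d ≤ ∑_S w + δ (X d - X ℓ)` with `X d = ∑ d e * x e`. On the other hand, for the
minimum-regret solution `S₀` the maxima are attained by one realization `d'`, and (ii) for `d'`
gives `∑_{S₀} w ≤ MR + δ X ℓ`. Chaining with (iii) and bounding `X d`, `X ℓ` by (i) and the
monotonicity of OPT yields the claim.
-/

open Finset Set

section Coordinate

variable {a b c t : ℝ}

lemma mul_le_max_mul_of_mem_Icc (hac : a ≤ c) (hcb : c ≤ b) : c * t ≤ max (b * t) (a * t) := by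
  rcases le_total 0 t with ht | ht
  · exact le_max_of_le_left (mul_le_mul_of_nonneg_right hcb ht)
  · exact le_max_of_le_right (mul_le_mul_of_nonpos_right hac ht)

lemma max_mul_eq_ite_mul (hab : a ≤ b) : max (b * t) (a * t) = (if 0 ≤ t then b else a) * t := by
  split_ifs with ht
  · exact max_eq_left (mul_le_mul_of_nonneg_right hab ht)
  · exact max_eq_right (mul_le_mul_of_nonpos_right hab (le_of_not_ge ht))

end Coordinate

section RobustCovering

variable {E : Type*} (𝒮 : Finset (Finset E)) (h𝒮 : 𝒮.Nonempty)

noncomputable def optCost (d : E → ℝ) : ℝ := 𝒮.inf' h𝒮 fun S => ∑ e ∈ S, d e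

noncomputable def maxRegret (B : Set (E → ℝ)) (T : Finset E) : ℝ :=
  sSup ((fun d => ∑ e ∈ T, d e - optCost 𝒮 h𝒮 d) '' B)

lemma optCost_mono : Monotone (optCost 𝒮 h𝒮) := fun _ _ hd =>
  le_inf' _ _ fun _ hS => (inf'_le _ hS).trans (sum_le_sum fun e _ => hd e)

variable {𝒮 h𝒮}

lemma sum_sub_optCost_le_maxRegret {ℓ u d : E → ℝ} (hd : d ∈ Icc ℓ u) (T : Finset E) :
    ∑ e ∈ T, d e - optCost 𝒮 h𝒮 d ≤ maxRegret 𝒮 h𝒮 (Icc ℓ u) T := by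
  refine le_csSup ⟨∑ e ∈ T, u e - optCost 𝒮 h𝒮 ℓ, ?_⟩ (mem_image_of_mem _ hd)
  rintro _ ⟨d', ⟨hℓd', hd'u⟩, rfl⟩
  exact sub_le_sub (sum_le_sum fun e _ => hd'u e) (optCost_mono 𝒮 h𝒮 hℓd')

variable (ℓ u : E → ℝ) (δ : ℝ) (x : E → ℝ)

noncomputable def roundingWeight (e : E) : ℝ :=
  max (u e * (1 - δ * x e)) (ℓ e * (1 - δ * x e)) + δ * ℓ e * x e

variable {ℓ u δ x}

lemma sum_le_sum_roundingWeight_add [Fintype E] {d : E → ℝ} (hd : d ∈ Icc ℓ u)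
    (hδx : ∀ e, 0 ≤ δ * x e) (T : Finset E) :
    ∑ e ∈ T, d e ≤
      ∑ e ∈ T, roundingWeight ℓ u δ x e + δ * (∑ e, d e * x e - ∑ e, ℓ e * x e) := by
  have hterm : ∀ e, d e ≤ roundingWeight ℓ u δ x e + δ * (d e * x e - ℓ e * x e) := fun e => by
    have := mul_le_max_mul_of_mem_Icc (t := 1 - δ * x e) (hd.1 e) (hd.2 e)
    unfold roundingWeight
    linarith
  have hgain : ∑ e ∈ T, δ * (d e * x e - ℓ e * x e) ≤ ∑ e, δ * (d e * x e - ℓ e * x e) :=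
    sum_le_sum_of_subset_of_nonneg (subset_univ T) fun e _ _ => by
      nlinarith [hδx e, hd.1 e]
  calc ∑ e ∈ T, d e
      ≤ ∑ e ∈ T, (roundingWeight ℓ u δ x e + δ * (d e * x e - ℓ e * x e)) :=
        sum_le_sum fun e _ => hterm e
    _ ≤ ∑ e ∈ T, roundingWeight ℓ u δ x e + ∑ e, δ * (d e * x e - ℓ e * x e) := by
        rw [sum_add_distrib]; gcongr
    _ = _ := by rw [← mul_sum, sum_sub_distrib]

lemma sum_roundingWeight_le_maxRegret_add [Fintype E] (hℓu : ℓ ≤ u)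
    (hopt : ∀ d ∈ Icc ℓ u, optCost 𝒮 h𝒮 d ≤ δ * ∑ e, d e * x e) (T : Finset E) :
    ∑ e ∈ T, roundingWeight ℓ u δ x e ≤ maxRegret 𝒮 h𝒮 (Icc ℓ u) T + δ * ∑ e, ℓ e * x e := by
  classical
  set d' : E → ℝ := fun e => if e ∈ T ∧ 0 ≤ 1 - δ * x e then u e else ℓ e with hd'
  have hd'_mem : d' ∈ Icc ℓ u := by
    constructor <;> intro e <;> simp only [hd'] <;> split_ifs
    exacts [hℓu e, le_rfl, le_rfl, hℓu e]
  have hweight : ∀ e ∈ T,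
      roundingWeight ℓ u δ x e = d' e - δ * (d' e * x e - ℓ e * x e) := fun e he => by
    rw [roundingWeight, max_mul_eq_ite_mul (hℓu e)]
    simp only [hd', he, true_and]
    ring
  have hgain : ∑ e ∈ T, (d' e * x e - ℓ e * x e) = ∑ e, (d' e * x e - ℓ e * x e) :=
    sum_subset (subset_univ T) fun e _ he => by simp [hd', he]
  have hsum : ∑ e ∈ T, roundingWeight ℓ u δ x e =
      ∑ e ∈ T, d' e - δ * (∑ e, d' e * x e - ∑ e, ℓ e * x e) := by
    rw [sum_congr rfl hweight, sum_sub_distrib, ← mul_sum, hgain, sum_sub_distrib]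
  have := sum_sub_optCost_le_maxRegret (𝒮 := 𝒮) (h𝒮 := h𝒮) hd'_mem T
  have := hopt d' hd'_mem
  linarith

end RobustCovering

theorem stmt_0_general {E : Type*} [Fintype E]
    (ℓ u : E → ℝ) (hℓu : ∀ e, ℓ e ≤ u e)
    (𝒮 : Finset (Finset E)) (h𝒮 : 𝒮.Nonempty)
    (B : Set (E → ℝ)) (hB : B = {d | ∀ e, ℓ e ≤ d e ∧ d e ≤ u e})
    (OPT : (E → ℝ) → ℝ)
    (hOPT : ∀ d, OPT d = 𝒮.inf' h𝒮 (fun S => ∑ e ∈ S, d e))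
    (regret : Finset E → ℝ)
    (hregret : ∀ S, regret S = sSup ((fun d => (∑ e ∈ S, d e) - OPT d) '' B))
    (MR : ℝ) (hMR : MR = 𝒮.inf' h𝒮 regret)
    (γ δ α β : ℝ) (hγ : 1 ≤ γ) (hδ : 1 ≤ δ) (hα : 0 ≤ α)
    (x : E → ℝ) (hx : ∀ e, 0 ≤ x e ∧ x e ≤ 1)
    (h1 : ∀ d ∈ B, ∑ e, d e * x e ≤ α * OPT d + β * MR)
    (h2 : ∀ d ∈ B, OPT d ≤ δ * ∑ e, d e * x e)
    (w : E → ℝ)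
    (hw : ∀ e, w e = max (u e * (1 - δ * x e)) (ℓ e * (1 - δ * x e)) + δ * ℓ e * x e)
    (S : Finset E)
    (h3 : ∑ e ∈ S, w e ≤ γ * 𝒮.inf' h𝒮 (fun S' => ∑ e ∈ S', w e)) :
    ∀ d ∈ B, ∑ e ∈ S, d e ≤ γ * δ * α * OPT d + (γ * δ * β + γ) * MR := by
  obtain rfl : B = Icc ℓ u := by rw [hB]; ext; simp [Pi.le_def, forall_and]
  obtain rfl : OPT = optCost 𝒮 h𝒮 := funext hOPT
  obtain rfl : regret = maxRegret 𝒮 h𝒮 (Icc ℓ u) := funext hregret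
  obtain rfl : w = roundingWeight ℓ u δ x := funext hw
  obtain ⟨S₀, hS₀, hMR₀⟩ := 𝒮.exists_mem_eq_inf' h𝒮 (maxRegret 𝒮 h𝒮 (Icc ℓ u))
  obtain rfl : MR = maxRegret 𝒮 h𝒮 (Icc ℓ u) S₀ := hMR.trans hMR₀
  intro d hd
  have hδx : ∀ e, 0 ≤ δ * x e := fun e => mul_nonneg (by linarith) (hx e).1
  have hS₀_weight := sum_roundingWeight_le_maxRegret_add hℓu h2 S₀
  have hS_weight := h3.trans (mul_le_mul_of_nonneg_left
    ((inf'_le _ hS₀).trans hS₀_weight) (by linarith : (0 : ℝ) ≤ γ))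
  have hS_cost := sum_le_sum_roundingWeight_add hd hδx S
  have hXd := h1 d hd
  have hXℓ := h1 ℓ ⟨le_rfl, hℓu⟩
  have hOPT_mono := optCost_mono 𝒮 h𝒮 hd.1
  have hγδ : 0 ≤ (γ - 1) * δ := mul_nonneg (by linarith) (by linarith)
  linarith [mul_le_mul_of_nonneg_left hXℓ hγδ, mul_le_mul_of_nonneg_left hXd (by linarith : 0 ≤ δ),
    mul_le_mul_of_nonneg_left hOPT_mono (mul_nonneg hγδ hα)]

/-- General rounding theorem for robust covering problems (nonalgorithmic core). -/
theorem stmt_0 {E : Type*} [Fintype E] [DecidableEq E]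
    (ℓ u : E → ℝ) (hℓ : ∀ e, 0 ≤ ℓ e) (hℓu : ∀ e, ℓ e ≤ u e)
    (𝒮 : Finset (Finset E)) (h𝒮 : 𝒮.Nonempty)
    (B : Set (E → ℝ)) (hB : B = {d | ∀ e, ℓ e ≤ d e ∧ d e ≤ u e})
    (OPT : (E → ℝ) → ℝ)
    (hOPT : ∀ d, OPT d = 𝒮.inf' h𝒮 (fun S => ∑ e ∈ S, d e))
    (regret : Finset E → ℝ)
    (hregret : ∀ S, regret S = sSup ((fun d => (∑ e ∈ S, d e) - OPT d) '' B))
    (MR : ℝ) (hMR : MR = 𝒮.inf' h𝒮 regret)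
    (γ δ α β : ℝ) (hγ : 1 ≤ γ) (hδ : 1 ≤ δ) (hα : 0 ≤ α) (hβ : 0 ≤ β)
    (x : E → ℝ) (hx : ∀ e, 0 ≤ x e ∧ x e ≤ 1)
    (h1 : ∀ d ∈ B, ∑ e, d e * x e ≤ α * OPT d + β * MR)
    (h2 : ∀ d ∈ B, OPT d ≤ δ * ∑ e, d e * x e)
    (w : E → ℝ)
    (hw : ∀ e, w e = max (u e * (1 - δ * x e)) (ℓ e * (1 - δ * x e)) + δ * ℓ e * x e)
    (S : Finset E) (hS : S ∈ 𝒮)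
    (h3 : ∑ e ∈ S, w e ≤ γ * 𝒮.inf' h𝒮 (fun S' => ∑ e ∈ S', w e)) :
    ∀ d ∈ B, ∑ e ∈ S, d e ≤ γ * δ * α * OPT d + (γ * δ * β + γ) * MR :=
  stmt_0_general ℓ u hℓu 𝒮 h𝒮 B hB OPT hOPT regret hregret MR hMR γ δ α β hγ hδ hα x hx h1 h2 w hw S
    h3
end

section
/- Let E be a finite set, for each e ∈ E let 0 ≤ ℓ_e ≤ u_e, let δ ≥ 0, let x : E → ℝ satisfy 0 ≤ x_e ≤ 1 for all e, and let S ⊆ E. Then sup over d in the box B = ∏_{e∈E} [ℓ_e, u_e] of (Σ_{e∈S} d_e − δ·Σ_{e∈E} d_e x_e) equals Σ_{e∈S} [max{u_e(1 − δx_e), ℓ_e(1 − δx_e)} + δℓ_e x_e] − Σ_{e∈E} δℓ_e x_e. -/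
/-!
The regret is linear in the realization `d`, with coefficient `[e ∈ S] - δ x_e` on `d_e`. A linear
function on a box is maximized coordinatewise, at `u_e` or `ℓ_e` according to the sign of the
coefficient. Off `S` the coefficient `-δ x_e` is nonpositive, so the maximizer takes `ℓ_e` there,
which produces the correction terms `δ ℓ_e x_e`.
-/

open Finset

lemma mul_le_max_mul_of_mem_Icc_s2 {ℓ u d : ℝ} (hd : d ∈ Set.Icc ℓ u) (c : ℝ) :
    d * c ≤ max (u * c) (ℓ * c) := by
  rcases le_total 0 c with hc | hc
  · exact (mul_le_mul_of_nonneg_right hd.2 hc).trans (le_max_left _ _)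
  · exact (mul_le_mul_of_nonpos_right hd.1 hc).trans (le_max_right _ _)

lemma ite_nonneg_mul_eq_max {ℓ u : ℝ} (hℓu : ℓ ≤ u) (c : ℝ) :
    (if 0 ≤ c then u else ℓ) * c = max (u * c) (ℓ * c) := by
  split_ifs with hc
  · exact (max_eq_left (mul_le_mul_of_nonneg_right hℓu hc)).symm
  · exact (max_eq_right (mul_le_mul_of_nonpos_right hℓu (not_le.1 hc).le)).symm

lemma isGreatest_image_sum_mul_Icc {E : Type*} [Fintype E] {ℓ u : E → ℝ} (hℓu : ℓ ≤ u)
    (c : E → ℝ) :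
    IsGreatest ((fun d : E → ℝ => ∑ e, d e * c e) '' Set.Icc ℓ u)
      (∑ e, max (u e * c e) (ℓ e * c e)) := by
  refine ⟨⟨fun e => if 0 ≤ c e then u e else ℓ e, ?_, ?_⟩, ?_⟩
  · constructor <;> intro e <;> dsimp only <;> split_ifs
    exacts [hℓu e, le_rfl, le_rfl, hℓu e]
  · exact sum_congr rfl fun e _ => ite_nonneg_mul_eq_max (hℓu e) (c e)
  · rintro _ ⟨d, hd, rfl⟩
    exact sum_le_sum fun e _ => mul_le_max_mul_of_mem_Icc_s2 ⟨hd.1 e, hd.2 e⟩ (c e)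

lemma sSup_image_sum_mul_Icc {E : Type*} [Fintype E] {ℓ u : E → ℝ} (hℓu : ℓ ≤ u)
    (c : E → ℝ) :
    sSup ((fun d : E → ℝ => ∑ e, d e * c e) '' Set.Icc ℓ u)
      = ∑ e, max (u e * c e) (ℓ e * c e) :=
  (isGreatest_image_sum_mul_Icc hℓu c).csSup_eq

theorem stmt_2_general {E : Type*} [Fintype E]
    (ℓ u : E → ℝ) (hℓu : ∀ e, ℓ e ≤ u e)
    (δ : ℝ) (hδ : 0 ≤ δ)
    (x : E → ℝ) (hx : ∀ e, 0 ≤ x e ∧ x e ≤ 1)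
    (S : Finset E) :
    sSup ((fun d : E → ℝ => (∑ e ∈ S, d e) - δ * ∑ e, d e * x e) ''
        {d | ∀ e, ℓ e ≤ d e ∧ d e ≤ u e})
      = (∑ e ∈ S, (max (u e * (1 - δ * x e)) (ℓ e * (1 - δ * x e)) + δ * ℓ e * x e))
        - ∑ e, δ * ℓ e * x e := by
  classical
  set c : E → ℝ := fun e => (if e ∈ S then 1 else 0) - δ * x e
  have hbox : {d : E → ℝ | ∀ e, ℓ e ≤ d e ∧ d e ≤ u e} = Set.Icc ℓ u :=
    Set.ext fun d => by simp [Pi.le_def, forall_and]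
  have hregret : (fun d : E → ℝ => (∑ e ∈ S, d e) - δ * ∑ e, d e * x e)
      = fun d => ∑ e, d e * c e := by
    funext d
    simp only [c, mul_sub, mul_ite, mul_one, mul_zero, sum_sub_distrib, sum_ite_mem,
      univ_inter, mul_sum]
    ring_nf
  have hclosed : (∑ e ∈ S, (max (u e * (1 - δ * x e)) (ℓ e * (1 - δ * x e)) + δ * ℓ e * x e))
        - ∑ e, δ * ℓ e * x e
      = ∑ e, ((if e ∈ S then max (u e * (1 - δ * x e)) (ℓ e * (1 - δ * x e))
          + δ * ℓ e * x e else 0) - δ * ℓ e * x e) := by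
    rw [sum_sub_distrib, sum_ite_mem, univ_inter]
  rw [hbox, hregret, sSup_image_sum_mul_Icc hℓu, hclosed]
  refine sum_congr rfl fun e _ => ?_
  by_cases he : e ∈ S
  · simp only [c, he, if_true]
    ring
  · have hc : c e ≤ 0 := by simpa [c, he] using mul_nonneg hδ (hx e).1
    rw [max_eq_right (mul_le_mul_of_nonpos_right (hℓu e) hc)]
    simp only [c, he, if_false]
    ring

/-- Closed form for the maximum regret of an integral solution `S` against the scaled
fractional solution `δ • x` over the box of realizations. -/
theorem stmt_2 {E : Type*} [Fintype E] [DecidableEq E]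
    (ℓ u : E → ℝ) (hℓ : ∀ e, 0 ≤ ℓ e) (hℓu : ∀ e, ℓ e ≤ u e)
    (δ : ℝ) (hδ : 0 ≤ δ)
    (x : E → ℝ) (hx : ∀ e, 0 ≤ x e ∧ x e ≤ 1)
    (S : Finset E) :
    sSup ((fun d : E → ℝ => (∑ e ∈ S, d e) - δ * ∑ e, d e * x e) ''
        {d | ∀ e, ℓ e ≤ d e ∧ d e ≤ u e})
      = (∑ e ∈ S, (max (u e * (1 - δ * x e)) (ℓ e * (1 - δ * x e)) + δ * ℓ e * x e))
        - ∑ e, δ * ℓ e * x e :=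
  stmt_2_general ℓ u hℓu δ hδ x hx S
end

section
/- Let E be a finite set, for each e ∈ E let 0 ≤ ℓ_e ≤ u_e, let x : E → ℝ satisfy 0 ≤ x_e ≤ 2 for all e, let r ∈ ℝ, and let 𝒯 be a nonempty finite family of subsets of E. Suppose there exist T ∈ 𝒯 and d in the box B = ∏_{e∈E}[ℓ_e, u_e] such that Σ_{e∈E} d_e x_e > 2·Σ_{e∈T} d_e + r. Then any T' ∈ 𝒯 minimizing Σ_{e∈T'} (u_e x_e − ℓ_e x_e + 2ℓ_e) over all members of 𝒯 satisfies Σ_{e∈T'} (ℓ_e x_e − 2ℓ_e) + Σ_{e∉T'} u_e x_e > r. -/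
/-!
For a fixed tree `T`, the regret `∑ d_e x_e - 2 ∑_{e ∈ T} d_e` is affine in `d` with
coefficient `x_e - 2 ≤ 0` on `T` and `x_e ≥ 0` off `T`, so over the box it is maximised at
`d = ℓ` on `T` and `d = u` off `T`. This worst-case regret equals `∑ u_e x_e` minus the
`T`-sum of the weights `u_e x_e - ℓ_e x_e + 2 ℓ_e`, hence a weight-minimising tree maximises it.
-/

open Finset

namespace RobustTSP

variable {E R : Type*} [Fintype E] [DecidableEq E] [CommRing R]

def worstRegret (ℓ u x : E → R) (S : Finset E) : R :=
  ∑ e ∈ S, (ℓ e * x e - 2 * ℓ e) + ∑ e ∈ Sᶜ, u e * x e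

def oracleWeight (ℓ u x : E → R) (e : E) : R :=
  u e * x e - ℓ e * x e + 2 * ℓ e

theorem worstRegret_eq_sub (ℓ u x : E → R) (S : Finset E) :
    worstRegret ℓ u x S = ∑ e, u e * x e - ∑ e ∈ S, oracleWeight ℓ u x e := by
  rw [worstRegret, ← sum_add_sum_compl S (fun e => u e * x e)]
  simp only [oracleWeight, sum_add_distrib, sum_sub_distrib]
  ring

section Ordered

variable [LinearOrder R] [IsStrictOrderedRing R]

theorem worstRegret_le_of_sum_oracleWeight_le {ℓ u x : E → R} {S S' : Finset E}
    (h : ∑ e ∈ S', oracleWeight ℓ u x e ≤ ∑ e ∈ S, oracleWeight ℓ u x e) :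
    worstRegret ℓ u x S ≤ worstRegret ℓ u x S' := by
  rw [worstRegret_eq_sub, worstRegret_eq_sub]
  exact sub_le_sub_left h _

theorem sum_mul_sub_two_mul_sum_le_worstRegret {ℓ u x d : E → R}
    (hd : ∀ e, ℓ e ≤ d e ∧ d e ≤ u e) (hx : ∀ e, 0 ≤ x e ∧ x e ≤ 2) (S : Finset E) :
    ∑ e, d e * x e - 2 * ∑ e ∈ S, d e ≤ worstRegret ℓ u x S := by
  have h_in : ∑ e ∈ S, (d e * x e - 2 * d e) ≤ ∑ e ∈ S, (ℓ e * x e - 2 * ℓ e) :=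
    sum_le_sum fun e _ => by
      nlinarith [mul_nonneg (sub_nonneg.2 (hd e).1) (sub_nonneg.2 (hx e).2)]
  have h_out : ∑ e ∈ Sᶜ, d e * x e ≤ ∑ e ∈ Sᶜ, u e * x e :=
    sum_le_sum fun e _ => mul_le_mul_of_nonneg_right (hd e).2 (hx e).1
  calc ∑ e, d e * x e - 2 * ∑ e ∈ S, d e
      = ∑ e ∈ S, (d e * x e - 2 * d e) + ∑ e ∈ Sᶜ, d e * x e := by
        rw [← sum_add_sum_compl S, sum_sub_distrib, mul_sum]
        ring
    _ ≤ worstRegret ℓ u x S := add_le_add h_in h_out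

end Ordered

end RobustTSP

open RobustTSP in
theorem stmt_3_general {E : Type*} [Fintype E] [DecidableEq E]
    (ℓ u : E → ℝ)
    (x : E → ℝ) (hx : ∀ e, 0 ≤ x e ∧ x e ≤ 2) (r : ℝ)
    (𝒯 : Finset (Finset E))
    (hex : ∃ T ∈ 𝒯, ∃ d : E → ℝ, (∀ e, ℓ e ≤ d e ∧ d e ≤ u e) ∧
      (∑ e, d e * x e) > 2 * (∑ e ∈ T, d e) + r)
    (T' : Finset E)
    (hmin : ∀ T ∈ 𝒯, ∑ e ∈ T', (u e * x e - ℓ e * x e + 2 * ℓ e)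
        ≤ ∑ e ∈ T, (u e * x e - ℓ e * x e + 2 * ℓ e)) :
    (∑ e ∈ T', (ℓ e * x e - 2 * ℓ e)) + ∑ e ∈ T'ᶜ, u e * x e > r := by
  obtain ⟨T, hT, d, hd, hregret⟩ := hex
  show r < worstRegret ℓ u x T'
  calc r < ∑ e, d e * x e - 2 * ∑ e ∈ T, d e := by linarith
    _ ≤ worstRegret ℓ u x T := sum_mul_sub_two_mul_sum_le_worstRegret hd hx T
    _ ≤ worstRegret ℓ u x T' := worstRegret_le_of_sum_oracleWeight_le (hmin T hT)

/-- Core computation of the approximate separation oracle for robust TSP: the member of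
`𝒯` minimizing the derived weights `u_e x_e - ℓ_e x_e + 2 ℓ_e` witnesses regret
exceeding `r`. -/
theorem stmt_3 {E : Type*} [Fintype E] [DecidableEq E]
    (ℓ u : E → ℝ) (hℓ : ∀ e, 0 ≤ ℓ e) (hℓu : ∀ e, ℓ e ≤ u e)
    (x : E → ℝ) (hx : ∀ e, 0 ≤ x e ∧ x e ≤ 2) (r : ℝ)
    (𝒯 : Finset (Finset E)) (h𝒯 : 𝒯.Nonempty)
    (hex : ∃ T ∈ 𝒯, ∃ d : E → ℝ, (∀ e, ℓ e ≤ d e ∧ d e ≤ u e) ∧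
      (∑ e, d e * x e) > 2 * (∑ e ∈ T, d e) + r)
    (T' : Finset E) (hT' : T' ∈ 𝒯)
    (hmin : ∀ T ∈ 𝒯, ∑ e ∈ T', (u e * x e - ℓ e * x e + 2 * ℓ e)
        ≤ ∑ e ∈ T, (u e * x e - ℓ e * x e + 2 * ℓ e)) :
    (∑ e ∈ T', (ℓ e * x e - 2 * ℓ e)) + ∑ e ∈ T'ᶜ, u e * x e > r :=
  stmt_3_general ℓ u x hx r 𝒯 hex T' hmin
end

section
/- Let 𝒜 and ℱ be finite sets, let w_A : 𝒜 → ℝ≥0 and w_F : ℱ → ℝ≥0 be nonnegative weights, and let α : 𝒜 × ℱ → ℝ≥0 satisfy Σ_{f∈ℱ} α(a,f) = 1 for every a ∈ 𝒜 and Σ_{a∈𝒜} α(a,f) ≤ 2 for every f ∈ ℱ. Let λ ≥ 1 and θ ≥ 1, and suppose Σ_{a∈𝒜} w_A(a) > 2λθ·Σ_{f∈ℱ} w_F(f). Then Σ_{(a,f) : w_A(a) > λ·w_F(f)} α(a,f)·w_A(a) > ((θ−1)/θ)·Σ_{(a,f)∈𝒜×ℱ} α(a,f)·w_A(a). -/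
/-!
Since every row of `α` sums to `1`, the total `α`-weighted mass `∑ a, ∑ f, α a f * wA a` is just
`∑ a, wA a`. A pair `(a, f)` that does not improve by the factor `λ` has `wA a ≤ λ wF f`, so the
non-improving pairs carry at most `∑ a, ∑ f, α a f * λ wF f ≤ 2λ ∑ f, wF f` of that mass, by the
column bound. Under the majority hypothesis this is less than a `1/θ` fraction of the total.
-/

open Finset

section FractionalAssignment

variable {A F : Type*} [Fintype A] [Fintype F] {α : A → F → ℝ}

lemma sum_sum_mul_eq_sum_of_sum_eq_one (hrow : ∀ a, ∑ f, α a f = 1) (u : A → ℝ) :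
    ∑ a, ∑ f, α a f * u a = ∑ a, u a := by
  simp_rw [← sum_mul, hrow, one_mul]

lemma sum_sum_mul_le_of_sum_le {c : ℝ} (hcol : ∀ f, ∑ a, α a f ≤ c) {v : F → ℝ}
    (hv : ∀ f, 0 ≤ v f) : ∑ a, ∑ f, α a f * v f ≤ c * ∑ f, v f := by
  rw [sum_comm, mul_sum]
  refine sum_le_sum fun f _ => ?_
  rw [← sum_mul]
  exact mul_le_mul_of_nonneg_right (hcol f) (hv f)

lemma sum_sum_mul_sub_le_sum_sum_ite (hα : ∀ a f, 0 ≤ α a f) (u : A → ℝ) {v : F → ℝ}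
    (hv : ∀ f, 0 ≤ v f) :
    ∑ a, ∑ f, α a f * u a - ∑ a, ∑ f, α a f * v f ≤
      ∑ a, ∑ f, (if u a > v f then α a f * u a else 0) := by
  simp only [← sum_sub_distrib]
  gcongr with a _ f _
  split_ifs with h
  · linarith [mul_nonneg (hα a f) (hv f)]
  · linarith [mul_le_mul_of_nonneg_left (not_lt.mp h) (hα a f)]

end FractionalAssignment

theorem stmt_8_general {A F : Type*} [Fintype A] [Fintype F]
    (wA : A → ℝ) (wF : F → ℝ) (hwF : ∀ f, 0 ≤ wF f)
    (α : A → F → ℝ) (hα : ∀ a f, 0 ≤ α a f)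
    (hrow : ∀ a, ∑ f, α a f = 1) (hcol : ∀ f, ∑ a, α a f ≤ 2)
    (lam θ : ℝ) (hlam : 1 ≤ lam) (hθ : 1 ≤ θ)
    (hmaj : ∑ a, wA a > 2 * lam * θ * ∑ f, wF f) :
    ∑ a, ∑ f, (if wA a > lam * wF f then α a f * wA a else 0)
      > ((θ - 1) / θ) * ∑ a, ∑ f, α a f * wA a := by
  have hθ0 : 0 < θ := by linarith
  have hv : ∀ f, 0 ≤ lam * wF f := fun f => mul_nonneg (by linarith) (hwF f)
  have hgood := sum_sum_mul_sub_le_sum_sum_ite hα wA hv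
  have hbad : ∑ a, ∑ f, α a f * (lam * wF f) ≤ 2 * lam * ∑ f, wF f := by
    rw [mul_assoc, mul_sum]
    exact sum_sum_mul_le_of_sum_le hcol hv
  have hsmall : 2 * lam * ∑ f, wF f < (∑ a, wA a) / θ := by
    rw [lt_div_iff₀ hθ0]
    linarith
  rw [sum_sum_mul_eq_sum_of_sum_eq_one hrow] at hgood ⊢
  rw [show (θ - 1) / θ * ∑ a, wA a = ∑ a, wA a - (∑ a, wA a) / θ by field_simp]
  linarith

/-- Contrapositive of the abstract averaging lemma (Corollary to `approxlocal`). -/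
theorem stmt_8 {A F : Type*} [Fintype A] [Fintype F]
    (wA : A → ℝ) (wF : F → ℝ) (hwA : ∀ a, 0 ≤ wA a) (hwF : ∀ f, 0 ≤ wF f)
    (α : A → F → ℝ) (hα : ∀ a f, 0 ≤ α a f)
    (hrow : ∀ a, ∑ f, α a f = 1) (hcol : ∀ f, ∑ a, α a f ≤ 2)
    (lam θ : ℝ) (hlam : 1 ≤ lam) (hθ : 1 ≤ θ)
    (hmaj : ∑ a, wA a > 2 * lam * θ * ∑ f, wF f) :
    ∑ a, ∑ f, (if wA a > lam * wF f then α a f * wA a else 0)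
      > ((θ - 1) / θ) * ∑ a, ∑ f, α a f * wA a :=
  stmt_8_general wA wF hwF α hα hrow hcol lam θ hlam hθ hmaj
end

section
/- Let 𝒜 and ℱ be finite sets with n = |𝒜| ≥ 1, let w_A, w'_A : 𝒜 → ℝ≥0 and w_F, w'_F : ℱ → ℝ≥0 be nonnegative weights, and let α : 𝒜 × ℱ → ℝ≥0 satisfy Σ_{f∈ℱ} α(a,f) = 1 for every a ∈ 𝒜 and Σ_{a∈𝒜} α(a,f) ≤ 2 for every f ∈ ℱ. Let Γ > 1 and 0 < ε < √Γ − 1, suppose Σ_{a∈𝒜} w_A(a) > 2Γ·Σ_{f∈ℱ} w_F(f), and suppose K := (√Γ−1)(√Γ−1−ε)/Γ − 1/n > 0. Then there exist a ∈ 𝒜 and f ∈ ℱ with α(a,f) > 0 such that: w_A(a) > √Γ·w_F(f); w_A(a) − (1+ε)·w_F(f) ≥ (1/n²)·Σ_{a'∈𝒜} w_A(a'); and ((1+ε)·w'_F(f) − w'_A(a)) · K · Σ_{a'∈𝒜} w_A(a') ≤ 2(1+ε)·(Σ_{f'∈ℱ} w'_F(f')) · (w_A(a) − (1+ε)·w_F(f)).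 -/
/-!
Average over the pairs `(a, f)` with weights `α a f`. The gain `wA a - (1 + ε) wF f` has
`α`-average at least `W - 2(1 + ε) ∑ wF` (rows sum to one, columns to at most two), where
`W = ∑ wA`. A pair that is not good (`wA a > √Γ wF f` and gain at least `W / n²`) has gain at
most `(√Γ - 1 - ε) wF f + W / n²`, and the total weight is `n`, so the good pairs carry a gain
of at least `W - 2√Γ ∑ wF - W / n > K W`. Their `α`-weighted cost increase
`(1 + ε) wF' f - wA' a` is at most `2(1 + ε) ∑ wF'`, so some good pair with positive weight
has cost-to-gain ratio at most the averaged one.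
-/

open Finset

theorem exists_pos_weight_le_of_sum_mul_le {ι : Type*} {s : Finset ι} {μ f g : ι → ℝ}
    (hμ : ∀ i ∈ s, 0 ≤ μ i) (hpos : ∃ i ∈ s, 0 < μ i)
    (h : ∑ i ∈ s, μ i * f i ≤ ∑ i ∈ s, μ i * g i) :
    ∃ i ∈ s, 0 < μ i ∧ f i ≤ g i := by
  by_contra! H
  obtain ⟨j, hj, hμj⟩ := hpos
  have : ∑ i ∈ s, μ i * g i < ∑ i ∈ s, μ i * f i := by
    refine sum_lt_sum (fun i hi => ?_) ⟨j, hj, mul_lt_mul_of_pos_left (H j hj hμj) hμj⟩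
    rcases (hμ i hi).eq_or_lt with hμi | hμi
    · simp [← hμi]
    · exact mul_le_mul_of_nonneg_left (H i hi hμi).le hμi.le
  linarith

theorem exists_pos_weight_mul_le_mul_of_le_sum {ι : Type*} {s : Finset ι} {μ x c : ι → ℝ}
    {T R : ℝ} (hμ : ∀ i ∈ s, 0 ≤ μ i) (hT : 0 < T) (hx : T ≤ ∑ i ∈ s, μ i * x i)
    (hc : ∑ i ∈ s, μ i * c i ≤ R) (hR : 0 ≤ R) :
    ∃ i ∈ s, 0 < μ i ∧ c i * T ≤ R * x i := by
  have hpos : ∃ i ∈ s, 0 < μ i := by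
    obtain ⟨i, hi, hμx⟩ := exists_lt_of_sum_lt (f := fun _ => (0 : ℝ))
      (g := fun i => μ i * x i) (by simpa using hT.trans_le hx)
    exact ⟨i, hi, (hμ i hi).lt_of_ne' (left_ne_zero_of_mul hμx.ne')⟩
  refine exists_pos_weight_le_of_sum_mul_le hμ hpos ?_
  calc ∑ i ∈ s, μ i * (c i * T) = (∑ i ∈ s, μ i * c i) * T := by
        rw [sum_mul]; simp only [mul_assoc]
    _ ≤ R * T := mul_le_mul_of_nonneg_right hc hT.le
    _ ≤ R * ∑ i ∈ s, μ i * x i := mul_le_mul_of_nonneg_left hx hR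
    _ = ∑ i ∈ s, μ i * (R * x i) := by rw [mul_sum]; simp only [mul_left_comm]

theorem sub_le_of_not_lt_and_le {x y s e θ : ℝ} (hy : 0 ≤ (s - e) * y) (hθ : 0 ≤ θ)
    (h : ¬(s * y < x ∧ θ ≤ x - e * y)) : x - e * y ≤ (s - e) * y + θ := by
  by_cases hx : s * y < x
  · linarith [lt_of_not_ge (mt (And.intro hx) h)]
  · linarith [le_of_not_gt hx]

theorem sqrt_sub_one_mul_sqrt_sub_one_sub_div_le {Γ ε : ℝ} (hΓ : 1 ≤ Γ) (hε : 0 ≤ 1 + ε) :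
    (√Γ - 1) * (√Γ - 1 - ε) / Γ ≤ 1 - √Γ / Γ := by
  have hs : 1 ≤ √Γ := Real.one_le_sqrt.2 hΓ
  have hsq : √Γ ^ 2 = Γ := Real.sq_sqrt (by linarith)
  have hΓs : √Γ / Γ * Γ = √Γ := div_mul_cancel₀ _ (by linarith)
  rw [div_le_iff₀ (by linarith), one_sub_mul, hΓs]
  nlinarith [mul_nonneg (sub_nonneg.2 hs) hε]

section FractionalAssignment

variable {A F : Type*} [Fintype A] [Fintype F] {α : A → F → ℝ}

theorem sum_prod_mul_fst_eq_of_row_sum_eq_one (hrow : ∀ a, ∑ f, α a f = 1) (u : A → ℝ) :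
    ∑ p : A × F, α p.1 p.2 * u p.1 = ∑ a, u a := by
  simp only [Fintype.sum_prod_type, ← sum_mul, hrow, one_mul]

theorem sum_prod_mul_snd_le_of_col_sum_le {β : ℝ} (hcol : ∀ f, ∑ a, α a f ≤ β) {v : F → ℝ}
    (hv : ∀ f, 0 ≤ v f) :
    ∑ p : A × F, α p.1 p.2 * v p.2 ≤ β * ∑ f, v f := by
  rw [Fintype.sum_prod_type_right, mul_sum]
  exact sum_le_sum fun f _ => by
    dsimp only; rw [← sum_mul]; exact mul_le_mul_of_nonneg_right (hcol f) (hv f)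

theorem sum_mul_sub_le_of_col_sum_le {wA' : A → ℝ} {wF' : F → ℝ} {β e : ℝ}
    (t : Finset (A × F)) (hα : ∀ a f, 0 ≤ α a f) (hcol : ∀ f, ∑ a, α a f ≤ β)
    (hwA' : ∀ a, 0 ≤ wA' a) (hwF' : ∀ f, 0 ≤ wF' f) (he : 0 ≤ e) :
    ∑ p ∈ t, α p.1 p.2 * (e * wF' p.2 - wA' p.1) ≤ β * e * ∑ f, wF' f :=
  calc _ ≤ ∑ p ∈ t, α p.1 p.2 * (e * wF' p.2) :=
        sum_le_sum fun p _ => mul_le_mul_of_nonneg_left (by linarith [hwA' p.1]) (hα _ _)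
    _ ≤ ∑ p : A × F, α p.1 p.2 * (e * wF' p.2) :=
        sum_le_sum_of_subset_of_nonneg (subset_univ t) fun p _ _ =>
          mul_nonneg (hα _ _) (mul_nonneg he (hwF' _))
    _ ≤ β * ∑ f, e * wF' f :=
        sum_prod_mul_snd_le_of_col_sum_le hcol fun f => mul_nonneg he (hwF' f)
    _ = β * e * ∑ f, wF' f := by rw [← mul_sum, mul_assoc]

noncomputable def goodPairs (wA : A → ℝ) (wF : F → ℝ) (s e θ : ℝ) : Finset (A × F) :=
  univ.filter fun p => s * wF p.2 < wA p.1 ∧ θ ≤ wA p.1 - e * wF p.2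

theorem mem_goodPairs {wA : A → ℝ} {wF : F → ℝ} {s e θ : ℝ} {p : A × F} :
    p ∈ goodPairs wA wF s e θ ↔ s * wF p.2 < wA p.1 ∧ θ ≤ wA p.1 - e * wF p.2 := by
  simp [goodPairs]

theorem sub_le_sum_goodPairs_mul_sub {wA : A → ℝ} {wF : F → ℝ} {β s e θ : ℝ}
    (hα : ∀ a f, 0 ≤ α a f) (hrow : ∀ a, ∑ f, α a f = 1) (hcol : ∀ f, ∑ a, α a f ≤ β)
    (hwF : ∀ f, 0 ≤ wF f) (he : 0 ≤ e) (hes : e ≤ s) (hθ : 0 ≤ θ) :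
    ∑ a, wA a - β * s * ∑ f, wF f - θ * Fintype.card A ≤
      ∑ p ∈ goodPairs wA wF s e θ, α p.1 p.2 * (wA p.1 - e * wF p.2) := by
  have hbad_nonneg (f : F) : 0 ≤ (s - e) * wF f := mul_nonneg (sub_nonneg.2 hes) (hwF f)
  have htotal : ∑ a, wA a - β * (e * ∑ f, wF f) ≤
      ∑ p : A × F, α p.1 p.2 * (wA p.1 - e * wF p.2) := by
    have := sum_prod_mul_snd_le_of_col_sum_le hcol (fun f => mul_nonneg he (hwF f))
    simp only [mul_sub, sum_sub_distrib, sum_prod_mul_fst_eq_of_row_sum_eq_one hrow,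
      ← mul_sum] at this ⊢
    linarith
  have hsplit := sum_filter_add_sum_filter_not univ
    (fun p : A × F => s * wF p.2 < wA p.1 ∧ θ ≤ wA p.1 - e * wF p.2)
    (fun p => α p.1 p.2 * (wA p.1 - e * wF p.2))
  set bad := univ.filter fun p : A × F => ¬(s * wF p.2 < wA p.1 ∧ θ ≤ wA p.1 - e * wF p.2)
  have hbad : ∑ p ∈ bad, α p.1 p.2 * (wA p.1 - e * wF p.2) ≤
      β * ((s - e) * ∑ f, wF f) + θ * Fintype.card A := by
    have hmass := sum_prod_mul_fst_eq_of_row_sum_eq_one hrow (fun _ => θ)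
    have hcolbd := sum_prod_mul_snd_le_of_col_sum_le hcol hbad_nonneg
    calc _ ≤ ∑ p ∈ bad, α p.1 p.2 * ((s - e) * wF p.2 + θ) :=
          sum_le_sum fun p hp => mul_le_mul_of_nonneg_left (sub_le_of_not_lt_and_le
            (hbad_nonneg _) hθ (mem_filter.1 hp).2) (hα _ _)
      _ ≤ ∑ p : A × F, α p.1 p.2 * ((s - e) * wF p.2 + θ) :=
          sum_le_sum_of_subset_of_nonneg (filter_subset _ _) fun p _ _ =>
            mul_nonneg (hα _ _) (add_nonneg (hbad_nonneg _) hθ)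
      _ ≤ _ := by
          simp only [mul_add, sum_add_distrib, ← mul_sum, sum_const, card_univ,
            nsmul_eq_mul] at hmass hcolbd ⊢
          linarith
  unfold goodPairs
  linarith

end FractionalAssignment

theorem stmt_9_general {A F : Type*} [Fintype A] [Fintype F]
    (wA wA' : A → ℝ) (wF wF' : F → ℝ)
    (hwA' : ∀ a, 0 ≤ wA' a)
    (hwF : ∀ f, 0 ≤ wF f) (hwF' : ∀ f, 0 ≤ wF' f)
    (α : A → F → ℝ) (hα : ∀ a f, 0 ≤ α a f)
    (hrow : ∀ a, ∑ f, α a f = 1) (hcol : ∀ f, ∑ a, α a f ≤ 2)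
    (Γ ε : ℝ) (hΓ : 1 < Γ) (hε : 0 < ε) (hε' : ε < Real.sqrt Γ - 1)
    (n : ℕ) (hn : n = Fintype.card A)
    (hmaj : ∑ a, wA a > 2 * Γ * ∑ f, wF f)
    (K : ℝ)
    (hK : K = (Real.sqrt Γ - 1) * (Real.sqrt Γ - 1 - ε) / Γ - 1 / (n : ℝ))
    (hKpos : 0 < K) :
    ∃ a f, 0 < α a f ∧ wA a > Real.sqrt Γ * wF f ∧
      wA a - (1 + ε) * wF f ≥ (1 / (n : ℝ) ^ 2) * ∑ a', wA a' ∧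
      ((1 + ε) * wF' f - wA' a) * K * (∑ a', wA a')
        ≤ 2 * (1 + ε) * (∑ f', wF' f') * (wA a - (1 + ε) * wF f) := by
  have hW : 0 < ∑ a, wA a :=
    lt_of_le_of_lt (mul_nonneg (by linarith) (sum_nonneg fun f _ => hwF f)) hmaj
  set W := ∑ a, wA a
  have hgain := sub_le_sum_goodPairs_mul_sub (wA := wA) (s := √Γ) (e := 1 + ε)
    (θ := 1 / (n : ℝ) ^ 2 * W) hα hrow hcol hwF (by linarith) (by linarith) (by positivity)
  have hK_le : K ≤ 1 - √Γ / Γ - 1 / (n : ℝ) :=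
    hK ▸ sub_le_sub_right (sqrt_sub_one_mul_sqrt_sub_one_sub_div_le hΓ.le (by linarith)) _
  have hmass : 1 / (n : ℝ) ^ 2 * W * Fintype.card A = W / n := by rw [← hn]; grind
  have hmaj' : 2 * √Γ * ∑ f, wF f < √Γ / Γ * W := by
    rw [div_mul_eq_mul_div, lt_div_iff₀ (by linarith)]
    nlinarith [Real.one_le_sqrt.2 hΓ.le]
  have hKW : K * W ≤ ∑ p ∈ goodPairs wA wF √Γ (1 + ε) (1 / (n : ℝ) ^ 2 * W),
      α p.1 p.2 * (wA p.1 - (1 + ε) * wF p.2) :=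
    calc K * W ≤ (1 - √Γ / Γ - 1 / (n : ℝ)) * W := mul_le_mul_of_nonneg_right hK_le hW.le
      _ = W - √Γ / Γ * W - W / n := by ring
      _ ≤ _ := by linarith
  have hcost := sum_mul_sub_le_of_col_sum_le (e := 1 + ε)
    (goodPairs wA wF √Γ (1 + ε) (1 / (n : ℝ) ^ 2 * W)) hα hcol hwA' hwF' (by linarith)
  obtain ⟨p, hp, hαp, hle⟩ := exists_pos_weight_mul_le_mul_of_le_sum (fun p _ => hα p.1 p.2)
    (mul_pos hKpos hW) hKW hcost (mul_nonneg (by linarith) (sum_nonneg fun f _ => hwF' f))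
  obtain ⟨hgood, hθ⟩ := mem_goodPairs.1 hp
  exact ⟨p.1, p.2, hαp, hgood, hθ, by linarith⟩

/-- Abstract averaging core of Lemma `greedyswap`: existence of a swap that decreases
the first cost substantially while increasing the second cost at a bounded rate of
exchange. -/
theorem stmt_9 {A F : Type*} [Fintype A] [Fintype F]
    (wA wA' : A → ℝ) (wF wF' : F → ℝ)
    (hwA : ∀ a, 0 ≤ wA a) (hwA' : ∀ a, 0 ≤ wA' a)
    (hwF : ∀ f, 0 ≤ wF f) (hwF' : ∀ f, 0 ≤ wF' f)
    (α : A → F → ℝ) (hα : ∀ a f, 0 ≤ α a f)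
    (hrow : ∀ a, ∑ f, α a f = 1) (hcol : ∀ f, ∑ a, α a f ≤ 2)
    (Γ ε : ℝ) (hΓ : 1 < Γ) (hε : 0 < ε) (hε' : ε < Real.sqrt Γ - 1)
    (n : ℕ) (hn : n = Fintype.card A) (hn1 : 1 ≤ n)
    (hmaj : ∑ a, wA a > 2 * Γ * ∑ f, wF f)
    (K : ℝ)
    (hK : K = (Real.sqrt Γ - 1) * (Real.sqrt Γ - 1 - ε) / Γ - 1 / (n : ℝ))
    (hKpos : 0 < K) :
    ∃ a f, 0 < α a f ∧ wA a > Real.sqrt Γ * wF f ∧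
      wA a - (1 + ε) * wF f ≥ (1 / (n : ℝ) ^ 2) * ∑ a', wA a' ∧
      ((1 + ε) * wF' f - wA' a) * K * (∑ a', wA a')
        ≤ 2 * (1 + ε) * (∑ f', wF' f') * (wA a - (1 + ε) * wF f) :=
  stmt_9_general wA wA' wF wF' hwA' hwF hwF' α hα hrow hcol Γ ε hΓ hε hε' n hn hmaj K hK hKpos
end

section
/- Let E be a finite set, for each e ∈ E let u_e ≥ 0, let x : E → ℝ satisfy 0 ≤ x_e ≤ 1 for all e, let ε > 0 and r ∈ ℝ. Let SOL, T' ⊆ E, and suppose: (i) there exists d with 0 ≤ d_e ≤ u_e for all e such that Σ_{e∈E} d_e x_e > Σ_{e∈SOL} d_e + (4+ε)·r; and (ii) Σ_{e∈T'∖SOL} u_e x_e ≤ (4+ε)·Σ_{e∈SOL∖T'} u_e x_e. Then Σ_{e∉T'} u_e x_e > r. -/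
/-! Write `f e = u e * x e`. Since `x ≤ 1` on `SOL` and `d ≤ u` elsewhere, the regret of `x`
against `SOL` under any `d` is at most `∑_{e ∉ SOL} f e`, so this sum exceeds `(4 + ε) r`.
Moving from `SOL` to `T'` changes the sum of `f` over the complement by
`∑_{T' \ SOL} f - ∑_{SOL \ T'} f`, which by the difference-approximation guarantee is at most
`(3 + ε) ∑_{SOL \ T'} f ≤ (3 + ε) ∑_{e ∉ T'} f e`; hence `(4 + ε) ∑_{e ∉ T'} f e > (4 + ε) r`. -/

open Finset

namespace Finset

variable {ι : Type*} [Fintype ι] [DecidableEq ι]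

theorem sum_compl_eq_sum_compl_add_sum_sdiff_sub_sum_sdiff {M : Type*} [AddCommGroup M]
    (f : ι → M) (S T : Finset ι) :
    ∑ i ∈ Sᶜ, f i = ∑ i ∈ Tᶜ, f i + (∑ i ∈ T \ S, f i - ∑ i ∈ S \ T, f i) := by
  rw [sum_sdiff_sub_sum_sdiff, eq_sub_of_add_eq (sum_compl_add_sum S f),
    ← sum_compl_add_sum T f]
  abel

variable {R : Type*} [CommRing R] [PartialOrder R] [IsOrderedRing R]

theorem sum_mul_sub_sum_le_sum_compl_mul {d u x : ι → R} (S : Finset ι)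
    (hd : ∀ i, 0 ≤ d i ∧ d i ≤ u i) (hx : ∀ i, 0 ≤ x i ∧ x i ≤ 1) :
    ∑ i, d i * x i - ∑ i ∈ S, d i ≤ ∑ i ∈ Sᶜ, u i * x i := by
  have hS : ∑ i ∈ S, d i * x i ≤ ∑ i ∈ S, d i :=
    sum_le_sum fun i _ => mul_le_of_le_one_right (hd i).1 (hx i).2
  have hSc : ∑ i ∈ Sᶜ, d i * x i ≤ ∑ i ∈ Sᶜ, u i * x i :=
    sum_le_sum fun i _ => mul_le_mul_of_nonneg_right (hd i).2 (hx i).1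
  rw [← sum_add_sum_compl S]
  linear_combination hS + hSc

theorem sum_compl_le_mul_sum_compl_of_sum_sdiff_le {f : ι → R} (hf : ∀ i, 0 ≤ f i)
    {S T : Finset ι} {α : R} (hα : 1 ≤ α)
    (h : ∑ i ∈ T \ S, f i ≤ α * ∑ i ∈ S \ T, f i) :
    ∑ i ∈ Sᶜ, f i ≤ α * ∑ i ∈ Tᶜ, f i := by
  have hsub : ∑ i ∈ S \ T, f i ≤ ∑ i ∈ Tᶜ, f i :=
    sum_le_sum_of_subset_of_nonneg (fun i hi => by simp_all) fun i _ _ => hf i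
  have hscale : (α - 1) * ∑ i ∈ S \ T, f i ≤ (α - 1) * ∑ i ∈ Tᶜ, f i :=
    mul_le_mul_of_nonneg_left hsub (sub_nonneg.2 hα)
  rw [sum_compl_eq_sum_compl_add_sum_sdiff_sub_sum_sdiff f S T]
  linear_combination h + hscale

end Finset

/-- Core computation of the separation oracle for robust Steiner tree with zero lower
bounds: the difference-approximate solution `T'` witnesses fractional regret
exceeding `r`. -/
theorem stmt_13 {E : Type*} [Fintype E] [DecidableEq E]
    (u : E → ℝ) (hu : ∀ e, 0 ≤ u e)
    (x : E → ℝ) (hx : ∀ e, 0 ≤ x e ∧ x e ≤ 1)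
    (ε : ℝ) (hε : 0 < ε) (r : ℝ)
    (SOL T' : Finset E)
    (h1 : ∃ d : E → ℝ, (∀ e, 0 ≤ d e ∧ d e ≤ u e) ∧
      (∑ e, d e * x e) > (∑ e ∈ SOL, d e) + (4 + ε) * r)
    (h2 : ∑ e ∈ T' \ SOL, u e * x e ≤ (4 + ε) * ∑ e ∈ SOL \ T', u e * x e) :
    ∑ e ∈ T'ᶜ, u e * x e > r := by
  obtain ⟨d, hd, hregret⟩ := h1
  have hf : ∀ e, 0 ≤ u e * x e := fun e => mul_nonneg (hu e) (hx e).1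
  have hSOL : (4 + ε) * r < ∑ e ∈ SOLᶜ, u e * x e := by
    linarith [sum_mul_sub_sum_le_sum_compl_mul SOL hd hx]
  have hT' : ∑ e ∈ SOLᶜ, u e * x e ≤ (4 + ε) * ∑ e ∈ T'ᶜ, u e * x e :=
    sum_compl_le_mul_sum_compl_of_sum_sdiff_le hf (by linarith) h2
  exact lt_of_mul_lt_mul_left (hSOL.trans_le hT') (by linarith)
end

section
/- Let E be a finite set, for each e ∈ E let 0 ≤ ℓ_e ≤ u_e, let x : E → ℝ satisfy 0 ≤ x_e ≤ 1 for all e, let r ∈ ℝ, and let α, β be reals with β ≥ 1 and α ≥ β + 1. Define c_e = u_e x_e − ℓ_e x_e + ℓ_e and c'_e = ℓ_e − ℓ_e x_e for each e. Let SOL, T' ⊆ E and suppose: (i) there exists d with ℓ_e ≤ d_e ≤ u_e for all e such that Σ_{e∈E} d_e x_e > α·Σ_{e∈SOL} d_e + β·r; (ii) Σ_{e∈T'∖SOL} c_e ≤ β·Σ_{e∈SOL∖T'} c_e; and (iii) Σ_{e∈T'∖SOL} c'_e ≤ ((α−1−β)/β)·Σ_{e∈SOL} c'_e. Then Σ_{e∉T'}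 u_e x_e + Σ_{e∈T'} ℓ_e x_e − Σ_{e∈T'} ℓ_e > r. -/
/-!
Write `a = u x` and `c' = ℓ (1 - x)`, so that `c = a + c'` and the maximal regret of a set `S` is
`∑ a - c(S)`. Against any realization `d`, the robustness condition of `SOL` is hardest to meet at
`d = u` off `SOL` and `d = ℓ` on `SOL`, so its violation gives
`β r < ∑ a - c(SOL) - (α - 1) ℓ(SOL)`. The difference bound turns `c(T') - c(SOL)` into at most
`(β - 1) c(SOL \ T')`, the slack `∑ a - c(T' ∪ SOL)` is at least `-c'(T' ∪ SOL)`, and the offset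
bound makes `(β - 1) c'(T' \ SOL)` cheap enough to be paid by `(α - 1) ℓ(SOL) ≥ (α - 1) c'(SOL)`.
Hence `β r < β (∑ a - c(T'))`, the maximal regret of `T'` scaled by `β`.
-/

open Finset

namespace RobustSteinerTree

variable {E : Type*} [Fintype E] [DecidableEq E]

def maxRegret (ℓ u x : E → ℝ) (S : Finset E) : ℝ :=
  ∑ e ∈ Sᶜ, u e * x e + ∑ e ∈ S, ℓ e * x e - ∑ e ∈ S, ℓ e

theorem maxRegret_eq_sum_sub_sum {ℓ u x c : E → ℝ}
    (hc : ∀ e, c e = u e * x e - ℓ e * x e + ℓ e) (S : Finset E) :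
    maxRegret ℓ u x S = ∑ e, u e * x e - ∑ e ∈ S, c e := by
  simp only [maxRegret, hc, sum_add_distrib, sum_sub_distrib, ← sum_add_sum_compl S]
  ring

theorem sum_mul_sub_mul_sum_le_maxRegret {ℓ u x d : E → ℝ} {α : ℝ}
    (hd : ∀ e, ℓ e ≤ d e ∧ d e ≤ u e) (hx : ∀ e, 0 ≤ x e ∧ x e ≤ α) (S : Finset E) :
    ∑ e, d e * x e - α * ∑ e ∈ S, d e ≤ maxRegret ℓ u x S - (α - 1) * ∑ e ∈ S, ℓ e := by
  have hS : ∀ e ∈ S, d e * x e - α * d e ≤ ℓ e * x e - α * ℓ e := fun e _ => by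
    nlinarith [hd e, hx e]
  have hSc : ∀ e ∈ Sᶜ, d e * x e ≤ u e * x e := fun e _ =>
    mul_le_mul_of_nonneg_right (hd e).2 (hx e).1
  have hsum := add_le_add (sum_le_sum hS) (sum_le_sum hSc)
  rw [sum_sub_distrib, sum_sub_distrib, ← mul_sum, ← mul_sum] at hsum
  rw [maxRegret, ← sum_add_sum_compl S]
  linarith

theorem sum_add_sum_sdiff_le {a c c' : E → ℝ} (ha : ∀ e, 0 ≤ a e)
    (hc : ∀ e, c e = a e + c' e) (S T : Finset E) :
    ∑ e ∈ T, c e + ∑ e ∈ S \ T, c e ≤ ∑ e, a e + ∑ e ∈ T \ S, c' e + ∑ e ∈ S, c' e := by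
  rw [← sum_union disjoint_sdiff, union_sdiff_self_eq_union, ← union_sdiff_right T S,
    add_assoc, sum_sdiff subset_union_right]
  simp only [hc, sum_add_distrib]
  linarith [sum_le_univ_sum_of_nonneg (s := T ∪ S) ha]

theorem sum_sub_sum_le_mul_sum_sub_sum {a c c' w : E → ℝ} {α β : ℝ} {S T : Finset E}
    (ha : ∀ e, 0 ≤ a e) (hc' : ∀ e, 0 ≤ c' e ∧ c' e ≤ w e) (hc : ∀ e, c e = a e + c' e)
    (hβ : 1 ≤ β) (hα : β + 1 ≤ α)
    (hdiff : ∑ e ∈ T \ S, c e ≤ β * ∑ e ∈ S \ T, c e)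
    (hoffset : ∑ e ∈ T \ S, c' e ≤ ((α - 1 - β) / β) * ∑ e ∈ S, c' e) :
    ∑ e, a e - ∑ e ∈ S, c e - (α - 1) * ∑ e ∈ S, w e ≤ β * (∑ e, a e - ∑ e ∈ T, c e) := by
  have hswap := sum_sdiff_sub_sum_sdiff (s₁ := S) (s₂ := T) (f := c)
  have hunion := mul_le_mul_of_nonneg_left (sum_add_sum_sdiff_le ha hc S T)
    (sub_nonneg.2 hβ)
  have hc'S : 0 ≤ ∑ e ∈ S, c' e := sum_nonneg fun e _ => (hc' e).1
  have hw : (α - 1) * ∑ e ∈ S, c' e ≤ (α - 1) * ∑ e ∈ S, w e :=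
    mul_le_mul_of_nonneg_left (sum_le_sum fun e _ => (hc' e).2) (by linarith)
  have hoffset' : (β - 1) * ∑ e ∈ T \ S, c' e ≤ (α - 1 - β) * ∑ e ∈ S, c' e := by
    have hβ0 : 0 < β := by linarith
    calc (β - 1) * ∑ e ∈ T \ S, c' e
        ≤ (β - 1) * ((α - 1 - β) / β * ∑ e ∈ S, c' e) :=
          mul_le_mul_of_nonneg_left hoffset (by linarith)
      _ = (β - 1) / β * ((α - 1 - β) * ∑ e ∈ S, c' e) := by ring
      _ ≤ 1 * ((α - 1 - β) * ∑ e ∈ S, c' e) := by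
          gcongr
          · exact mul_nonneg (by linarith) hc'S
          · rw [div_le_one hβ0]; linarith
      _ = _ := one_mul _
  linarith

end RobustSteinerTree

open RobustSteinerTree in
/-- Core computation of the approximate separation oracle for robust Steiner tree with
general lower bounds: if `SOL` witnesses that the fractional solution `x` violates the
`(α, β)`-robustness condition with slack `r`, then the doubly-approximate solution `T'`
witnesses fractional regret exceeding `r`. -/
theorem stmt_14 {E : Type*} [Fintype E] [DecidableEq E]
    (ℓ u : E → ℝ) (hℓ : ∀ e, 0 ≤ ℓ e) (hℓu : ∀ e, ℓ e ≤ u e)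
    (x : E → ℝ) (hx : ∀ e, 0 ≤ x e ∧ x e ≤ 1)
    (r α β : ℝ) (hβ : 1 ≤ β) (hα : β + 1 ≤ α)
    (c c' : E → ℝ)
    (hc : ∀ e, c e = u e * x e - ℓ e * x e + ℓ e)
    (hc' : ∀ e, c' e = ℓ e - ℓ e * x e)
    (SOL T' : Finset E)
    (h1 : ∃ d : E → ℝ, (∀ e, ℓ e ≤ d e ∧ d e ≤ u e) ∧
      (∑ e, d e * x e) > α * (∑ e ∈ SOL, d e) + β * r)
    (h2 : ∑ e ∈ T' \ SOL, c e ≤ β * ∑ e ∈ SOL \ T', c e)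
    (h3 : ∑ e ∈ T' \ SOL, c' e ≤ ((α - 1 - β) / β) * ∑ e ∈ SOL, c' e) :
    (∑ e ∈ T'ᶜ, u e * x e) + (∑ e ∈ T', ℓ e * x e) - (∑ e ∈ T', ℓ e) > r := by
  obtain ⟨d, hd, hviolated⟩ := h1
  have hxα : ∀ e, 0 ≤ x e ∧ x e ≤ α := fun e => ⟨(hx e).1, by linarith [(hx e).2]⟩
  have hux : ∀ e, 0 ≤ u e * x e := fun e => mul_nonneg ((hℓ e).trans (hℓu e)) (hx e).1
  have hc'ℓ : ∀ e, 0 ≤ c' e ∧ c' e ≤ ℓ e := fun e => by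
    rw [hc']; constructor <;> nlinarith [hℓ e, hx e]
  have hcsplit : ∀ e, c e = u e * x e + c' e := fun e => by rw [hc, hc']; ring
  have hbound := sum_mul_sub_mul_sum_le_maxRegret hd hxα SOL
  have hkey := sum_sub_sum_le_mul_sum_sub_sum hux hc'ℓ hcsplit hβ hα h2 h3
  rw [maxRegret_eq_sum_sub_sum hc] at hbound
  change r < maxRegret ℓ u x T'
  rw [maxRegret_eq_sum_sub_sum hc]
  exact lt_of_mul_lt_mul_left (by linarith) (by linarith : (0 : ℝ) ≤ β)
end
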